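/- arXiv:1012.3905 — 6 statements merged into one kernel-verified Lean document; each statement's English description precedes it below -/
import Mathlib

section
/- An order monomorphism (order embedding) between two flag-connected diamond lattices of the same finite rank is an order isomorphism. -/
/-!
An order embedding `e : P ↪o Q` of graded orders of the same rank preserves grades: the image of a
flag is a chain with as many elements as a flag of `Q`, hence a flag, and in a flag the grade of an
element is the number of elements below it.

Now let a flag `G₁` of `Q` lie in the range of `e`, and let `G₂` be adjacent to it, with
`G₂ \ G₁ = {z}` and `G₁ \ G₂ = {y}` of the same grade `k`. The elements `e p`, `e r` of `G₁` of
grades `k - 1` and `k + 1` also lie in `G₂`, so `z ∈ [e p, e r]`. By the diamond property both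
`[p, r]` and `[e p, e r]` have four elements, so `e` maps the first onto the second and `z` is in
the range of `e`. Since the flag graph of `Q` is connected and some flag (the image of a flag of `P`)
lies in the range of `e`, every flag does, so `e` is surjective.
-/

/-- Adjacency of flags: they differ in exactly one element. -/
def flagAdj {α : Type*} [PartialOrder α] (F F' : Flag α) : Prop :=
  F ≠ F' ∧ ((F : Set α) \ (F' : Set α)).ncard = 1 ∧ ((F' : Set α) \ (F : Set α)).ncard = 1

/-- The flag graph of a poset. -/
def flagGraph (α : Type*) [PartialOrder α] : SimpleGraph (Flag α) where
  Adj := flagAdj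
  symm := ⟨fun _ _ h => ⟨h.1.symm, h.2.2, h.2.1⟩⟩
  loopless := ⟨fun _ h => h.1 rfl⟩

/-- The diamond condition: every rank-2 interval has exactly 4 elements. -/
def IsDiamond (α : Type*) [PartialOrder α] [GradeOrder ℕ α] : Prop :=
  ∀ a b : α, a ≤ b → grade ℕ b = grade ℕ a + 2 → (Set.Icc a b).ncard = 4

open Set

section Graded

variable {α : Type*} [PartialOrder α]

section GradeOrder

variable [GradeOrder ℕ α] {C : Set α} {x y : α}

theorem IsChain.le_of_grade_le (hC : IsChain (· ≤ ·) C) (hx : x ∈ C) (hy : y ∈ C)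
    (h : grade ℕ x ≤ grade ℕ y) : x ≤ y := by
  rcases hC.total hx hy with hxy | hyx
  · exact hxy
  · rcases hyx.eq_or_lt with rfl | hlt
    · exact le_rfl
    · exact absurd (grade_strictMono hlt) h.not_gt

theorem IsChain.injOn_grade (hC : IsChain (· ≤ ·) C) : InjOn (grade ℕ) C :=
  fun _ hx _ hy h => (hC.le_of_grade_le hx hy h.le).antisymm (hC.le_of_grade_le hy hx h.ge)

theorem grade_image_subset_Iic [OrderTop α] (s : Set α) : grade ℕ '' s ⊆ Iic (grade ℕ (⊤ : α)) :=
  image_subset_iff.2 fun a _ => show grade ℕ a ≤ _ from grade_mono le_top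

theorem IsChain.ncard_le [OrderTop α] (hC : IsChain (· ≤ ·) C) :
    C.ncard ≤ grade ℕ (⊤ : α) + 1 := by
  rw [← hC.injOn_grade.ncard_image]
  calc (grade ℕ '' C).ncard ≤ (Iic (grade ℕ (⊤ : α))).ncard :=
        ncard_le_ncard (grade_image_subset_Iic C)
    _ = grade ℕ (⊤ : α) + 1 := by simp

theorem IsChain.finite [OrderTop α] (hC : IsChain (· ≤ ·) C) : C.Finite :=
  ((finite_Iic _).subset (grade_image_subset_Iic C)).of_finite_image hC.injOn_grade

theorem IsChain.isMaxChain_of_ncard_eq [OrderTop α] (hC : IsChain (· ≤ ·) C)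
    (h : C.ncard = grade ℕ (⊤ : α) + 1) : IsMaxChain (· ≤ ·) C :=
  ⟨hC, fun _ hD hCD => eq_of_subset_of_ncard_le hCD (h ▸ hD.ncard_le) hD.finite⟩

end GradeOrder

theorem exists_le_grade_eq [OrderBot α] [GradeMinOrder ℕ α] {b : α} :
    ∀ {k : ℕ}, k ≤ grade ℕ b → ∃ c ≤ b, grade ℕ c = k
  | 0, _ => ⟨⊥, bot_le, grade_bot⟩
  | k + 1, hk => by
    obtain ⟨c, hcb, rfl⟩ := exists_le_grade_eq (b := b) (Nat.le_of_succ_le hk)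
    obtain ⟨d, hcd, hdb⟩ := exists_covBy_le_of_lt (hcb.lt_of_ne fun h => by subst h; omega)
    exact ⟨d, hdb, (Nat.covBy_iff_add_one_eq.1 (hcd.grade ℕ)).symm⟩

namespace Flag

theorem exists_mem_le_grade_eq [OrderBot α] [GradeMinOrder ℕ α] (F : Flag α) {b : α}
    (hb : b ∈ F) {k : ℕ} (hk : k ≤ grade ℕ b) : ∃ c ∈ F, c ≤ b ∧ grade ℕ c = k := by
  obtain ⟨c, hcb, hck⟩ := exists_le_grade_eq (b := (⟨b, hb⟩ : F)) hk
  exact ⟨c, c.2, hcb, hck⟩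

variable [BoundedOrder α] [GradeMinOrder ℕ α]

theorem exists_mem_grade_eq (F : Flag α) {k : ℕ} (hk : k ≤ grade ℕ (⊤ : α)) :
    ∃ c ∈ F, grade ℕ c = k := by
  obtain ⟨c, hc, -, hck⟩ := F.exists_mem_le_grade_eq F.top_mem hk
  exact ⟨c, hc, hck⟩

theorem ncard_eq (F : Flag α) : (F : Set α).ncard = grade ℕ (⊤ : α) + 1 := by
  refine le_antisymm F.chain_le.ncard_le ?_
  rw [← F.chain_le.injOn_grade.ncard_image]
  calc grade ℕ (⊤ : α) + 1 = (Iic (grade ℕ (⊤ : α))).ncard := by simp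
    _ ≤ (grade ℕ '' (F : Set α)).ncard := by
      refine ncard_le_ncard (fun k hk => ?_) (F.chain_le.finite.image _)
      obtain ⟨c, hc, rfl⟩ := F.exists_mem_grade_eq hk
      exact mem_image_of_mem _ hc

theorem grade_eq_ncard (F : Flag α) {a : α} (ha : a ∈ F) :
    grade ℕ a = ((F : Set α) ∩ Iio a).ncard := by
  have : grade ℕ '' ((F : Set α) ∩ Iio a) = Iio (grade ℕ a) := by
    refine Subset.antisymm (image_subset_iff.2 fun x hx => show grade ℕ x < _ from
      grade_strictMono hx.2) fun k hk => ?_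
    obtain ⟨c, hc, hca, rfl⟩ := F.exists_mem_le_grade_eq ha (le_of_lt hk)
    exact ⟨c, ⟨hc, hca.lt_of_ne (by rintro rfl; exact (mem_Iio.1 hk).false)⟩, rfl⟩
  rw [← (F.chain_le.injOn_grade.mono inter_subset_left).ncard_image, this]
  simp

end Flag

theorem flagAdj.exists_sdiff_eq_singleton [OrderBot α] [OrderTop α] [GradeMinOrder ℕ α]
    {F G : Flag α} (h : flagAdj F G) :
    ∃ y z, (F : Set α) \ G = {y} ∧ (G : Set α) \ F = {z} ∧ grade ℕ z = grade ℕ y := by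
  obtain ⟨-, hFG, hGF⟩ := h
  obtain ⟨y, hy⟩ := ncard_eq_one.1 hFG
  obtain ⟨z, hz⟩ := ncard_eq_one.1 hGF
  have hzG : z ∈ G ∧ z ∉ F := by simpa [hz] using (mem_sdiff z (s := (G : Set α)) (t := F))
  obtain ⟨w, hwF, hwz⟩ := F.exists_mem_le_grade_eq F.top_mem (grade_mono (le_top : z ≤ ⊤))
  have hwG : w ∉ G := fun hwG => hzG.2 (G.chain_le.injOn_grade hwG hzG.1 hwz.2 ▸ hwF)
  have hwy : w = y := by simpa [hy] using (mem_sdiff w).2 ⟨hwF, hwG⟩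
  exact ⟨y, z, hy, hz, hwy ▸ hwz.2.symm⟩

end Graded

namespace OrderEmbedding

variable {P Q : Type*} [PartialOrder P] [BoundedOrder P] [GradeBoundedOrder ℕ P]
  [PartialOrder Q] [BoundedOrder Q] [GradeBoundedOrder ℕ Q]
  (e : P ↪o Q) (htop : grade ℕ (⊤ : P) = grade ℕ (⊤ : Q))
include htop

theorem isMaxChain_image_flag (F : Flag P) : IsMaxChain (· ≤ ·) (e '' F) :=
  (F.chain_le.image e).isMaxChain_of_ncard_eq
    (by rw [ncard_image_of_injective _ e.injective, F.ncard_eq, htop])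

theorem grade_apply (a : P) : grade ℕ (e a) = grade ℕ a := by
  obtain ⟨F, ha⟩ := Flag.exists_mem a
  let G := Flag.ofIsMaxChain _ (e.isMaxChain_image_flag htop F)
  have hG : (G : Set Q) ∩ Iio (e a) = e '' ((F : Set P) ∩ Iio a) := by
    rw [← e.preimage_Iio, image_inter_preimage]; rfl
  rw [G.grade_eq_ncard (mem_image_of_mem e ha), hG, ncard_image_of_injective _ e.injective,
    F.grade_eq_ncard ha]

theorem image_Icc_eq_of_isDiamond (hdP : IsDiamond P) (hdQ : IsDiamond Q) {p r : P} (hpr : p ≤ r)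
    (hgr : grade ℕ r = grade ℕ p + 2) : e '' Icc p r = Icc (e p) (e r) := by
  have hcard : (Icc (e p) (e r)).ncard = 4 :=
    hdQ _ _ (e.monotone hpr) (by rw [e.grade_apply htop, e.grade_apply htop, hgr])
  refine eq_of_subset_of_ncard_le e.monotone.image_Icc_subset ?_
    (finite_of_ncard_ne_zero (by rw [hcard]; norm_num))
  rw [hcard, ncard_image_of_injective _ e.injective, hdP p r hpr hgr]

theorem subset_range_of_flagAdj (hdP : IsDiamond P) (hdQ : IsDiamond Q) {G₁ G₂ : Flag Q}
    (hG₁ : (G₁ : Set Q) ⊆ range e) (hadj : flagAdj G₁ G₂) : (G₂ : Set Q) ⊆ range e := by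
  obtain ⟨y, z, hy, hz, hzy⟩ := hadj.exists_sdiff_eq_singleton
  intro q hq₂
  by_cases hq₁ : q ∈ G₁
  · exact hG₁ hq₁
  obtain rfl : z = q := (hz ▸ ⟨hq₂, hq₁⟩ : q ∈ ({z} : Set Q)).symm
  have hy₂ : y ∉ G₂ := ((mem_sdiff y).1 (hy ▸ mem_singleton y)).2
  have hy_pos : 0 < grade ℕ y :=
    (Nat.zero_le _).trans_lt (grade_strictMono (bot_lt_iff_ne_bot.2 fun h => hy₂ (h ▸ G₂.bot_mem)))
  have hy_top : grade ℕ y < grade ℕ (⊤ : Q) :=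
    grade_strictMono (lt_top_iff_ne_top.2 fun h => hy₂ (h ▸ G₂.top_mem))
  have mem₂ : ∀ x ∈ G₁, grade ℕ x ≠ grade ℕ y → x ∈ G₂ := fun x hx hxy => by
    by_contra hx₂
    exact hxy (congrArg (grade ℕ) (hy ▸ ⟨hx, hx₂⟩ : x ∈ ({y} : Set Q)))
  obtain ⟨u, hu, hug⟩ := G₁.exists_mem_grade_eq (k := grade ℕ y - 1) (by omega)
  obtain ⟨w, hw, hwg⟩ := G₁.exists_mem_grade_eq (k := grade ℕ y + 1) (by omega)
  obtain ⟨p, rfl⟩ := hG₁ hu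
  obtain ⟨r, rfl⟩ := hG₁ hw
  rw [e.grade_apply htop] at hug hwg
  have hpr : p ≤ r := by
    refine e.le_iff_le.1 (G₁.chain_le.le_of_grade_le hu hw ?_)
    rw [e.grade_apply htop, e.grade_apply htop]
    omega
  have hz_Icc : z ∈ Icc (e p) (e r) := by
    refine ⟨G₂.chain_le.le_of_grade_le (mem₂ _ hu ?_) hq₂ ?_,
      G₂.chain_le.le_of_grade_le hq₂ (mem₂ _ hw ?_) ?_⟩ <;> rw [e.grade_apply htop] <;> omega
  rw [← e.image_Icc_eq_of_isDiamond htop hdP hdQ hpr (by omega)] at hz_Icc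
  exact image_subset_range _ _ hz_Icc

end OrderEmbedding

theorem stmt2_general {P Q : Type*}
    [Lattice P] [BoundedOrder P] [GradeBoundedOrder ℕ P]
    [Lattice Q] [BoundedOrder Q] [GradeBoundedOrder ℕ Q]
    (d : ℕ) (hP : grade ℕ (⊤ : P) = d + 1) (hQ : grade ℕ (⊤ : Q) = d + 1)
    (hdP : IsDiamond P) (hdQ : IsDiamond Q)
    (hcQ : (flagGraph Q).Connected)
    (φ : P → Q) (hφ : ∀ a b : P, a ≤ b ↔ φ a ≤ φ b) :
    ∃ e : P ≃o Q, ⇑e = φ := by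
  let e : P ↪o Q := OrderEmbedding.ofMapLEIff φ fun a b => (hφ a b).symm
  have htop : grade ℕ (⊤ : P) = grade ℕ (⊤ : Q) := hP.trans hQ.symm
  have walk_subset_range {G₁ G₂ : Flag Q} (w : (flagGraph Q).Walk G₁ G₂) :
      (G₁ : Set Q) ⊆ range e → (G₂ : Set Q) ⊆ range e := by
    induction w with
    | nil => exact id
    | cons hadj _ ih => exact fun h => ih (e.subset_range_of_flagAdj htop hdP hdQ h hadj)
  have hsurj : Function.Surjective e := fun q => by
    obtain ⟨F⟩ : Nonempty (Flag P) := inferInstance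
    obtain ⟨G, hqG⟩ := Flag.exists_mem q
    obtain ⟨w⟩ := hcQ.preconnected (Flag.ofIsMaxChain _ (e.isMaxChain_image_flag htop F)) G
    exact walk_subset_range w (image_subset_range _ _) hqG
  exact ⟨OrderIso.ofSurjective e hsurj, rfl⟩

/-- An order monomorphism between flag-connected diamond lattices of the same
finite rank is an order isomorphism. -/
theorem stmt2 {P Q : Type*}
    [Fintype P] [Lattice P] [BoundedOrder P] [GradeBoundedOrder ℕ P]
    [Fintype Q] [Lattice Q] [BoundedOrder Q] [GradeBoundedOrder ℕ Q]
    (d : ℕ) (hP : grade ℕ (⊤ : P) = d + 1) (hQ : grade ℕ (⊤ : Q) = d + 1)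
    (hdP : IsDiamond P) (hdQ : IsDiamond Q)
    (hcP : (flagGraph P).Connected) (hcQ : (flagGraph Q).Connected)
    (φ : P → Q) (hφ : ∀ a b : P, a ≤ b ↔ φ a ≤ φ b) :
    ∃ e : P ≃o Q, ⇑e = φ :=
  stmt2_general d hP hQ hdP hdQ hcQ φ hφ
end

section
/- Every finite lattice is isomorphic to the maxbiclique lattice of the comparability relation between its meet-irreducible and join-irreducible elements, where the isomorphism sends an element c to the pair consisting of all meet-irreducibles above c and all join-irreducibles below c. -/
/-- A pair of sets of meet-irreducibles and join-irreducibles forming an induced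
biclique of the comparability relation `(i, j) ∈ R ↔ j ≤ i`. -/
def IsIrrBiclique {L : Type*} [Lattice L] (p : Set L × Set L) : Prop :=
  (∀ i ∈ p.1, InfIrred i) ∧ (∀ j ∈ p.2, SupIrred j) ∧ ∀ i ∈ p.1, ∀ j ∈ p.2, j ≤ i

/-- The maxbicliques of the comparability relation between meet-irreducibles and
join-irreducibles of a lattice. -/
def MaxBiclique (L : Type*) [Lattice L] : Type _ :=
  {p : Set L × Set L // IsIrrBiclique p ∧
    ∀ q : Set L × Set L, IsIrrBiclique q → p.1 ⊆ q.1 → p.2 ⊆ q.2 → p = q}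

/-- Maxbicliques are ordered by containment of the lower (join-irreducible) parts. -/
instance {L : Type*} [Lattice L] : LE (MaxBiclique L) :=
  ⟨fun p q => p.1.2 ⊆ q.1.2⟩

/-!
In a finite lattice every element `c` is the join of the join-irreducibles below it and the
meet of the meet-irreducibles above it. Hence a join-irreducible lies below `c` iff it lies below
every meet-irreducible above `c`, and dually, so the pair of these two sets is a maxbiclique.
For the same reason `c ≤ d` as soon as every join-irreducible below `c` lies below `d`, so
sending `c` to this pair is an order embedding. It is onto because a maxbiclique `(I₀, J₀)` is contained in, hence
equal to, the pair of `⨆ J₀`.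
-/

theorem le_of_forall_supIrred_le {α : Type*} [SemilatticeSup α] [OrderBot α] [WellFoundedLT α]
    {a b : α} (h : ∀ j, SupIrred j → j ≤ a → j ≤ b) : a ≤ b := by
  obtain ⟨s, rfl, hs⟩ := exists_supIrred_decomposition a
  exact Finset.sup_le fun j hj => h j (hs hj) (Finset.le_sup (f := id) hj)

theorem le_of_forall_infIrred_le {α : Type*} [SemilatticeInf α] [OrderTop α] [WellFoundedGT α]
    {a b : α} (h : ∀ i, InfIrred i → b ≤ i → a ≤ i) : a ≤ b := by
  obtain ⟨s, rfl, hs⟩ := exists_infIrred_decomposition b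
  exact Finset.le_inf fun i hi => h i (hs hi) (Finset.inf_le (f := id) hi)

namespace MaxBiclique

variable {L : Type*} [Lattice L] [BoundedOrder L]

def irrBiclique (c : L) : Set L × Set L :=
  ({i | InfIrred i ∧ c ≤ i}, {j | SupIrred j ∧ j ≤ c})

omit [BoundedOrder L] in
theorem isIrrBiclique_irrBiclique (c : L) : IsIrrBiclique (irrBiclique c) :=
  ⟨fun _ hi => hi.1, fun _ hj => hj.1, fun _ hi _ hj => hj.2.trans hi.2⟩

theorem irrBiclique_eq_of_subset [WellFoundedLT L] [WellFoundedGT L] (c : L)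
    {q : Set L × Set L} (hq : IsIrrBiclique q) (h₁ : (irrBiclique c).1 ⊆ q.1)
    (h₂ : (irrBiclique c).2 ⊆ q.2) : irrBiclique c = q := by
  obtain ⟨hq₁, hq₂, hq⟩ := hq
  have h₁' : q.1 ⊆ (irrBiclique c).1 := fun i hi =>
    ⟨hq₁ i hi, le_of_forall_supIrred_le fun j hj hjc => hq i hi j (h₂ ⟨hj, hjc⟩)⟩
  have h₂' : q.2 ⊆ (irrBiclique c).2 := fun j hj =>
    ⟨hq₂ j hj, le_of_forall_infIrred_le fun i hi hci => hq i (h₁ ⟨hi, hci⟩) j hj⟩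
  exact Prod.ext (h₁.antisymm h₁') (h₂.antisymm h₂')

def ofElem [WellFoundedLT L] [WellFoundedGT L] (c : L) : MaxBiclique L :=
  ⟨irrBiclique c, isIrrBiclique_irrBiclique c, fun _ => irrBiclique_eq_of_subset c⟩

variable [WellFoundedLT L] [WellFoundedGT L]

theorem ofElem_le_ofElem_iff {c d : L} : ofElem c ≤ ofElem d ↔ c ≤ d :=
  ⟨fun h => le_of_forall_supIrred_le fun _ hj hjc => (h ⟨hj, hjc⟩).2,
    fun h _ hj => ⟨hj.1, hj.2.trans h⟩⟩

theorem ofElem_injective : Function.Injective (ofElem (L := L)) := fun _ _ h =>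
  (ofElem_le_ofElem_iff.1 (h ▸ fun _ => id)).antisymm (ofElem_le_ofElem_iff.1 (h ▸ fun _ => id))

theorem ofElem_surjective [Finite L] : Function.Surjective (ofElem (L := L)) := by
  rintro ⟨p, ⟨hp₁, hp₂, hp⟩, hmax⟩
  let c := (Set.toFinite p.2).toFinset.sup id
  have h₁ : p.1 ⊆ (irrBiclique c).1 := fun i hi =>
    ⟨hp₁ i hi, Finset.sup_le fun j hj => hp i hi j ((Set.toFinite p.2).mem_toFinset.1 hj)⟩
  have h₂ : p.2 ⊆ (irrBiclique c).2 := fun j hj =>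
    ⟨hp₂ j hj, Finset.le_sup (f := id) ((Set.toFinite p.2).mem_toFinset.2 hj)⟩
  exact ⟨c, Subtype.ext (hmax _ (isIrrBiclique_irrBiclique c) h₁ h₂).symm⟩

end MaxBiclique

/-- Every finite lattice is isomorphic to the maxbiclique lattice of the comparability
relation between its meet-irreducible and join-irreducible elements, via the map sending
`c` to (meet-irreducibles above `c`, join-irreducibles below `c`). -/
theorem stmt4 {L : Type*} [Fintype L] [Lattice L] [BoundedOrder L] :
    ∃ e : L ≃o MaxBiclique L, ∀ c : L,
      (e c).1 = ({i | InfIrred i ∧ c ≤ i}, {j | SupIrred j ∧ j ≤ c}) :=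
  ⟨RelIso.ofSurjective ⟨⟨MaxBiclique.ofElem, MaxBiclique.ofElem_injective⟩,
    MaxBiclique.ofElem_le_ofElem_iff⟩ MaxBiclique.ofElem_surjective, fun _ => rfl⟩
end

section
/- For any maxbiclique (I0, J0) of the irreducibles-comparability relation of a finite lattice, setting c to be the join of J0, the pair consisting of all meet-irreducibles above c and all join-irreducibles below c equals (I0, J0). -/
section IrrCut

variable {L : Type*} [Lattice L]

def irrCut (c : L) : Set L × Set L :=
  ({i | InfIrred i ∧ c ≤ i}, {j | SupIrred j ∧ j ≤ c})

theorem isIrrBiclique_irrCut (c : L) : IsIrrBiclique (irrCut c) :=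
  ⟨fun _ hi => hi.1, fun _ hj => hj.1, fun _ hi _ hj => hj.2.trans hi.2⟩

theorem IsIrrBiclique.subset_irrCut {A B : Set L} (h : IsIrrBiclique (A, B)) {c : L}
    (hBc : c ∈ upperBounds B) (hcA : c ∈ lowerBounds A) :
    A ⊆ (irrCut c).1 ∧ B ⊆ (irrCut c).2 :=
  ⟨fun i hi => ⟨h.1 i hi, hcA hi⟩, fun j hj => ⟨h.2.1 j hj, hBc hj⟩⟩

theorem IsIrrBiclique.eq_irrCut_of_maximal {A B : Set L} (h : IsIrrBiclique (A, B))
    (hmax : ∀ q : Set L × Set L, IsIrrBiclique q → A ⊆ q.1 → B ⊆ q.2 → (A, B) = q)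
    {c : L} (hBc : c ∈ upperBounds B) (hcA : c ∈ lowerBounds A) :
    irrCut c = (A, B) :=
  have hsub := h.subset_irrCut hBc hcA
  (hmax _ (isIrrBiclique_irrCut c) hsub.1 hsub.2).symm

end IrrCut

/-- For any maxbiclique `(A, B)` of the irreducibles-comparability relation of a finite
lattice, letting `c` be the join of `B`, the meet-irreducibles above `c` are exactly `A`
and the join-irreducibles below `c` are exactly `B`. -/
theorem stmt5 {L : Type*} [Fintype L] [Lattice L] [BoundedOrder L]
    (A B : Set L) (hbc : IsIrrBiclique (A, B))
    (hmax : ∀ q : Set L × Set L, IsIrrBiclique q → A ⊆ q.1 → B ⊆ q.2 → (A, B) = q)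
    (c : L) (hc : c = (Set.toFinite B).toFinset.sup id) :
    {i | InfIrred i ∧ c ≤ i} = A ∧ {j | SupIrred j ∧ j ≤ c} = B := by
  have hlub : IsLUB B c := by
    simpa [hc] using (Set.toFinite B).toFinset.isLUB_sup_id
  have hcA : c ∈ lowerBounds A := fun i hi => hlub.2 fun j hj => hbc.2.2 i hi j hj
  exact Prod.ext_iff.mp (hbc.eq_irrCut_of_maximal hmax hlub.1 hcA)
end

section
/- If (I0,J0) are the meet-irreducibles above and join-irreducibles below an element c of a finite lattice, then (I0,J0) is a maxbiclique of the irreducibles-comparability relation: no additional meet-irreducible or join-irreducible can be added while keeping every element of the lower part below every element of the upper part. -/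
/-!
In a finite lattice every element is the join of the join-irreducibles below it and the meet of
the meet-irreducibles above it. Hence a meet-irreducible `i` lying above every join-irreducible
below `c` lies above `c`, and dually, so neither side of the biclique can be enlarged.
-/

section Irreducible

variable {L : Type*} [Finite L] [Lattice L]

lemma le_of_forall_supIrred_le_s6 [OrderBot L] {x y : L}
    (h : ∀ j, SupIrred j → j ≤ x → j ≤ y) : x ≤ y := by
  obtain ⟨s, rfl, hs⟩ := exists_supIrred_decomposition x
  exact Finset.sup_le fun j hj => h j (hs hj) (Finset.le_sup (f := id) hj)

lemma le_of_forall_le_infIrred [OrderTop L] {x y : L}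
    (h : ∀ i, InfIrred i → y ≤ i → x ≤ i) : x ≤ y := by
  obtain ⟨s, rfl, hs⟩ := exists_infIrred_decomposition y
  exact Finset.le_inf fun i hi => h i (hs hi) (Finset.inf_le (f := id) hi)

end Irreducible

/-- For an element `c` of a finite lattice, the pair of all meet-irreducibles above `c`
and all join-irreducibles below `c` is a maxbiclique of the irreducibles-comparability
relation: it is an induced biclique, and it cannot be enlarged. -/
theorem stmt6 {L : Type*} [Fintype L] [Lattice L] [BoundedOrder L] (c : L)
    (A B : Set L) (hA : A = {i | InfIrred i ∧ c ≤ i}) (hB : B = {j | SupIrred j ∧ j ≤ c}) :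
    (∀ i ∈ A, ∀ j ∈ B, j ≤ i) ∧
    ∀ A' B' : Set L, A ⊆ A' → B ⊆ B' →
      (∀ i ∈ A', InfIrred i) → (∀ j ∈ B', SupIrred j) →
      (∀ i ∈ A', ∀ j ∈ B', j ≤ i) → A' = A ∧ B' = B := by
  subst hA hB
  refine ⟨fun i hi j hj => hj.2.trans hi.2, fun A' B' hAA' hBB' hA'irr hB'irr hbic => ⟨?_, ?_⟩⟩
  · refine Set.Subset.antisymm (fun i hi => ⟨hA'irr i hi, ?_⟩) hAA'
    exact le_of_forall_supIrred_le_s6 fun j hj hjc => hbic i hi j (hBB' ⟨hj, hjc⟩)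
  · refine Set.Subset.antisymm (fun j hj => ⟨hB'irr j hj, ?_⟩) hBB'
    exact le_of_forall_le_infIrred fun i hi hci => hbic i (hAA' ⟨hi, hci⟩) j hj
end

section
/- Let N be a real n x m matrix of rank d+1 with compact SVD N = U Σ V*, and suppose x in R^{d+1} and y in R^{d+1} are vectors such that all entries of U x and V y are nonzero and <x, Σ^{-1} y> = 1. Then the matrix M = D1 N D2 + J has rank d, where D1 = diag(-Ux)^{-1}, D2 = diag(Vy)^{-1}, and J is the all-ones matrix. -/
/-!
Writing `b = -U x` and `c = V y`, the all-ones matrix is `diag(b)⁻¹ (b cᵀ) diag(c)⁻¹`, so `M` has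
the rank of `N + b cᵀ = U (Σ - x yᵀ) Vᵀ`, which is that of `Σ - x yᵀ = Σ (1 - Σ⁻¹x yᵀ)`. Since
`yᵀ Σ⁻¹ x = 1`, the kernel of `1 - Σ⁻¹x yᵀ` is the line through `Σ⁻¹ x`, so the rank is `d`.
-/

open Matrix

namespace Matrix

variable {K : Type*} [Field K] {ι : Type*} [Fintype ι] [DecidableEq ι]

theorem ker_mulVecLin_one_sub_vecMulVec {w y : ι → K} (h : y ⬝ᵥ w = 1) :
    LinearMap.ker (1 - vecMulVec w y).mulVecLin = K ∙ w := by
  have hmul : ∀ z, (1 - vecMulVec w y) *ᵥ z = z - (y ⬝ᵥ z) • w := fun z => by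
    rw [sub_mulVec, one_mulVec, vecMulVec_mulVec, op_smul_eq_smul]
  apply le_antisymm
  · intro z hz
    rw [LinearMap.mem_ker, mulVecLin_apply, hmul, sub_eq_zero] at hz
    rw [hz]
    exact Submodule.smul_mem _ _ (Submodule.mem_span_singleton_self w)
  · rw [Submodule.span_le, Set.singleton_subset_iff, SetLike.mem_coe, LinearMap.mem_ker,
      mulVecLin_apply, hmul, h, one_smul, sub_self]

theorem rank_one_sub_vecMulVec {w y : ι → K} (h : y ⬝ᵥ w = 1) :
    (1 - vecMulVec w y).rank = Fintype.card ι - 1 := by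
  have hw : w ≠ 0 := by
    rintro rfl
    simp at h
  have hker : Module.finrank K (LinearMap.ker (1 - vecMulVec w y).mulVecLin) = 1 := by
    rw [ker_mulVecLin_one_sub_vecMulVec h, finrank_span_singleton hw]
  have := LinearMap.finrank_range_add_finrank_ker (1 - vecMulVec w y).mulVecLin
  rw [hker, Module.finrank_fintype_fun_eq_card] at this
  exact Nat.eq_sub_of_add_eq this

theorem rank_sub_vecMulVec {D : Matrix ι ι K} (hD : IsUnit D.det) {x y : ι → K}
    (h : y ⬝ᵥ (D⁻¹ *ᵥ x) = 1) : (D - vecMulVec x y).rank = Fintype.card ι - 1 := by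
  have hfactor : D - vecMulVec x y = D * (1 - vecMulVec (D⁻¹ *ᵥ x) y) := by
    rw [mul_sub, mul_one, mul_vecMulVec, mulVec_mulVec, mul_nonsing_inv _ hD, one_mulVec]
  rw [hfactor, rank_mul_eq_right_of_isUnit_det _ _ hD, rank_one_sub_vecMulVec h]

section Semiring

variable {R : Type*} [CommSemiring R] {m n k : Type*} [Fintype k]

theorem rank_mul_eq_right_of_mul_eq_one [StrongRankCondition R] [Fintype m] [Fintype n]
    [DecidableEq k] {L : Matrix k m R} {U : Matrix m k R} (hU : L * U = 1) (A : Matrix k n R) :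
    (U * A).rank = A.rank := by
  refine le_antisymm (rank_mul_le_right U A) ?_
  calc A.rank = (L * (U * A)).rank := by rw [← Matrix.mul_assoc, hU, Matrix.one_mul]
    _ ≤ (U * A).rank := rank_mul_le_right _ _

theorem rank_mul_eq_left_of_mul_eq_one [StrongRankCondition R] [Fintype n] [DecidableEq k]
    {W : Matrix k n R} {V : Matrix n k R} (hW : W * V = 1) (A : Matrix m k R) :
    (A * W).rank = A.rank := by
  refine le_antisymm (rank_mul_le_left A W) ?_
  calc A.rank = (A * W * V).rank := by rw [Matrix.mul_assoc, hW, Matrix.mul_one]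
    _ ≤ (A * W).rank := rank_mul_le_left _ _

theorem mul_vecMulVec_mul_transpose (U : Matrix m k R) (V : Matrix n k R) (x y : k → R) :
    U * vecMulVec x y * Vᵀ = vecMulVec (U *ᵥ x) (V *ᵥ y) := by
  rw [mul_vecMulVec, vecMulVec_mul, vecMul_transpose]

end Semiring

theorem isUnit_det_diagonal {v : ι → K} (hv : ∀ i, v i ≠ 0) : IsUnit (diagonal v).det := by
  simpa [det_diagonal] using Finset.prod_ne_zero_iff.2 fun i _ => hv i

theorem rank_inv_diagonal_mul_mul_inv_diagonal_add_ones {m n : Type*} [Fintype m] [Fintype n]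
    [DecidableEq m] [DecidableEq n] {b : m → K} {c : n → K}
    (hb : ∀ i, b i ≠ 0) (hc : ∀ j, c j ≠ 0) (A : Matrix m n K) :
    ((diagonal b)⁻¹ * A * (diagonal c)⁻¹ + of fun _ _ => (1 : K)).rank =
      (A + vecMulVec b c).rank := by
  have hdb := isUnit_det_diagonal hb
  have hdc := isUnit_det_diagonal hc
  have hones : (diagonal b)⁻¹ * vecMulVec b c * (diagonal c)⁻¹ = of fun _ _ => (1 : K) := by
    have hbc : vecMulVec b c = diagonal b * (of fun _ _ => 1 : Matrix m n K) * diagonal c := by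
      ext
      simp [vecMulVec_apply]
    rw [hbc, ← Matrix.mul_assoc, ← Matrix.mul_assoc, nonsing_inv_mul _ hdb, Matrix.one_mul,
      Matrix.mul_assoc, mul_nonsing_inv _ hdc, Matrix.mul_one]
  rw [← hones, ← Matrix.add_mul, ← Matrix.mul_add,
    rank_mul_eq_left_of_isUnit_det _ _ (isUnit_nonsing_inv_det_iff.2 hdc),
    rank_mul_eq_right_of_isUnit_det _ _ (isUnit_nonsing_inv_det_iff.2 hdb)]

end Matrix

theorem stmt11_general {n m d : ℕ}
    (U : Matrix (Fin n) (Fin (d + 1)) ℝ) (V : Matrix (Fin m) (Fin (d + 1)) ℝ)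
    (σ : Fin (d + 1) → ℝ) (hσ : ∀ i, 0 < σ i)
    (hU : Uᵀ * U = 1) (hV : Vᵀ * V = 1)
    (N : Matrix (Fin n) (Fin m) ℝ) (hN : N = U * Matrix.diagonal σ * Vᵀ)
    (x y : Fin (d + 1) → ℝ)
    (hx : ∀ i, (U *ᵥ x) i ≠ 0) (hy : ∀ i, (V *ᵥ y) i ≠ 0)
    (hxy : x ⬝ᵥ ((Matrix.diagonal σ)⁻¹ *ᵥ y) = 1) :
    ((Matrix.diagonal (-(U *ᵥ x)))⁻¹ * N * (Matrix.diagonal (V *ᵥ y))⁻¹ +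
      Matrix.of fun _ _ => (1 : ℝ)).rank = d := by
  have hyx : y ⬝ᵥ ((diagonal σ)⁻¹ *ᵥ x) = 1 := by
    rw [← hxy, dotProduct_comm, dotProduct_mulVec, ← mulVec_transpose, transpose_nonsing_inv,
      diagonal_transpose, dotProduct_comm]
  have hsvd : N + vecMulVec (-(U *ᵥ x)) (V *ᵥ y) = U * (diagonal σ - vecMulVec x y) * Vᵀ := by
    rw [Matrix.mul_sub, Matrix.sub_mul, mul_vecMulVec_mul_transpose, hN, neg_vecMulVec,
      sub_eq_add_neg]
  rw [rank_inv_diagonal_mul_mul_inv_diagonal_add_ones (b := -(U *ᵥ x))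
      (fun i => neg_ne_zero.2 (hx i)) hy, hsvd,
    rank_mul_eq_left_of_mul_eq_one (by rw [transpose_transpose, hV] : Vᵀ * Vᵀᵀ = 1),
    rank_mul_eq_right_of_mul_eq_one hU,
    rank_sub_vecMulVec (isUnit_det_diagonal fun i => (hσ i).ne') hyx, Fintype.card_fin,
    Nat.add_sub_cancel]

/-- If `N = U Σ Vᵀ` has rank `d + 1` and `x`, `y` are such that `U x` and `V y` have no
zero entries and `⟨x, Σ⁻¹ y⟩ = 1`, then `D₁ N D₂ + 𝟙` has rank `d`, where
`D₁ = diag(-Ux)⁻¹`, `D₂ = diag(Vy)⁻¹` and `𝟙` is the all-ones matrix. -/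
theorem stmt11 {n m d : ℕ}
    (U : Matrix (Fin n) (Fin (d + 1)) ℝ) (V : Matrix (Fin m) (Fin (d + 1)) ℝ)
    (σ : Fin (d + 1) → ℝ) (hσ : ∀ i, 0 < σ i)
    (hU : Uᵀ * U = 1) (hV : Vᵀ * V = 1)
    (N : Matrix (Fin n) (Fin m) ℝ) (hN : N = U * Matrix.diagonal σ * Vᵀ)
    (hrank : N.rank = d + 1)
    (x y : Fin (d + 1) → ℝ)
    (hx : ∀ i, (U *ᵥ x) i ≠ 0) (hy : ∀ i, (V *ᵥ y) i ≠ 0)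
    (hxy : x ⬝ᵥ ((Matrix.diagonal σ)⁻¹ *ᵥ y) = 1) :
    ((Matrix.diagonal (-(U *ᵥ x)))⁻¹ * N * (Matrix.diagonal (V *ᵥ y))⁻¹ +
      Matrix.of fun _ _ => (1 : ℝ)).rank = d :=
  stmt11_general U V σ hσ hU hV N hN x y hx hy hxy
end

section
/- Let L be a finite graded diamond lattice of rank d+1 in which, for every element a of rank k, the graph with vertices the rank k-1 elements below a and edges the rank k-2 elements expressible as meets of two such elements is connected. Then L is flag connected: its flag graph is connected. -/
/-- For an element `a`, the graph whose vertices are the elements covered by `a` and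
where two such elements are adjacent when their meet has rank two less than `a`. -/
def coverGraph {α : Type*} [Lattice α] [GradeOrder ℕ α] (a : α) :
    SimpleGraph {b : α // b ⋖ a} where
  Adj b b' := b ≠ b' ∧ grade ℕ ((b : α) ⊓ (b' : α)) + 2 = grade ℕ a
  symm := ⟨fun _ _ h => ⟨h.1.symm, by rw [inf_comm]; exact h.2⟩⟩
  loopless := ⟨fun _ h => h.1 rfl⟩

/-!
Induction on `a`: any two flags through `a` that agree above `a` are connected. Such flags
contain elements `b, b' ⋖ a`, joined by a path in `coverGraph a`. If `c, c₁ ⋖ a` are adjacent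
there, `m = c ⊓ c₁` gives `m ⋖ c ⋖ a` and `m ⋖ c₁ ⋖ a`, and two flags through these chains that
coincide outside the open interval `(m, a)` are adjacent; flags through a common `c ⋖ a` are
connected by the induction hypothesis at `c`. Splicing the upper part of one flag onto the
lower part of another produces all the flags needed.
-/

namespace Flag

variable {α : Type*} [PartialOrder α]

/-- The part of `F` above `a` together with the part of `G` below `a`. -/
def splice (F G : Flag α) (a : α) (hF : a ∈ F) (hG : a ∈ G) : Flag α where
  carrier := {x | x ∈ G ∧ x ≤ a} ∪ {x | x ∈ F ∧ a ≤ x}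
  Chain' := by
    rintro x (⟨hxG, hxa⟩ | ⟨hxF, hax⟩) y (⟨hyG, hya⟩ | ⟨hyF, hay⟩) -
    · exact G.le_or_le hxG hyG
    · exact Or.inl (hxa.trans hay)
    · exact Or.inr (hya.trans hax)
    · exact F.le_or_le hxF hyF
  max_chain' := by
    intro s hs hsub
    refine hsub.antisymm fun y hy => ?_
    rcases hs.total hy (hsub (Or.inl ⟨hG, le_rfl⟩)) with hya | hay
    · refine Or.inl ⟨mem_iff_forall_le_or_ge.2 fun z hz => ?_, hya⟩
      rcases G.le_or_le hz hG with hza | haz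
      · exact hs.total hy (hsub (Or.inl ⟨hz, hza⟩))
      · exact Or.inl (hya.trans haz)
    · refine Or.inr ⟨mem_iff_forall_le_or_ge.2 fun z hz => ?_, hay⟩
      rcases F.le_or_le hz hF with hza | haz
      · exact Or.inr (hza.trans hay)
      · exact hs.total hy (hsub (Or.inr ⟨hz, haz⟩))

variable {F G : Flag α} {a x : α} {hF : a ∈ F} {hG : a ∈ G}

lemma mem_splice_of_ge (hx : a ≤ x) : x ∈ F.splice G a hF hG ↔ x ∈ F :=
  ⟨by rintro (⟨-, hxa⟩ | ⟨hxF, -⟩); exacts [le_antisymm hxa hx ▸ hF, hxF], fun h => Or.inr ⟨h, hx⟩⟩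

lemma mem_splice_of_le (hx : x ≤ a) : x ∈ F.splice G a hF hG ↔ x ∈ G :=
  ⟨by rintro (⟨hxG, -⟩ | ⟨-, hax⟩); exacts [hxG, le_antisymm hx hax ▸ hG], fun h => Or.inl ⟨h, hx⟩⟩

lemma eq_or_le_of_covBy {c : α} (hca : c ⋖ a) (ha : a ∈ F) (hx : x ∈ F) (hcx : c ≤ x) :
    x = c ∨ a ≤ x := by
  rcases F.le_or_le hx ha with hxa | hax
  · exact (hca.eq_or_eq hcx hxa).imp_right ge_of_eq
  · exact Or.inr hax

lemma mem_iff_of_covBy {F' : Flag α} {c : α} (hca : c ⋖ a) (hcF : c ∈ F) (hcF' : c ∈ F')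
    (haF : a ∈ F) (haF' : a ∈ F') (h : ∀ x, a ≤ x → (x ∈ F ↔ x ∈ F')) :
    ∀ x, c ≤ x → (x ∈ F ↔ x ∈ F') := by
  intro x hcx
  constructor
  · intro hx
    rcases F.eq_or_le_of_covBy hca haF hx hcx with rfl | hax
    exacts [hcF', (h x hax).1 hx]
  · intro hx
    rcases F'.eq_or_le_of_covBy hca haF' hx hcx with rfl | hax
    exacts [hcF, (h x hax).2 hx]

lemma sdiff_eq_singleton_of_covBy {F' : Flag α} {m c c' : α} (hmc : m ⋖ c) (hca : c ⋖ a)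
    (hmc' : m ⋖ c') (hne : c ≠ c') (hmF : m ∈ F) (hcF : c ∈ F) (haF : a ∈ F) (hc'F' : c' ∈ F')
    (h : ∀ x, x ≤ m ∨ a ≤ x → (x ∈ F ↔ x ∈ F')) : (F : Set α) \ F' = {c} := by
  refine Set.eq_singleton_iff_unique_mem.2 ⟨⟨hcF, fun hcF' => hne ?_⟩, ?_⟩
  · rcases F'.le_or_le hcF' hc'F' with hcc' | hc'c
    · exact ((hmc'.eq_or_eq hmc.le hcc').resolve_left hmc.ne').symm ▸ rfl
    · exact (hmc.eq_or_eq hmc'.le hc'c).resolve_left hmc'.ne' ▸ rfl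
  · rintro x ⟨hxF, hxF'⟩
    have hmx : m ≤ x := (F.le_or_le hmF hxF).resolve_right fun hxm => hxF' ((h x (.inl hxm)).1 hxF)
    rcases F.eq_or_le_of_covBy hmc hcF hxF hmx with rfl | hcx
    · exact absurd ((h x (.inl le_rfl)).1 hxF) hxF'
    rcases F.eq_or_le_of_covBy hca haF hxF hcx with hxc | hax
    · exact hxc
    · exact absurd ((h x (.inr hax)).1 hxF) hxF'

lemma exists_covBy_mem [Finite α] (ha : a ∈ F) (hmin : ¬IsMin a) : ∃ b ∈ F, b ⋖ a := by
  obtain ⟨b, hb⟩ := exists_covBy_of_wellFoundedGT (a := (⟨a, ha⟩ : F)) (isMin_coe.not.1 hmin)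
  exact ⟨b, b.2, coe_covBy_coe.2 hb⟩

end Flag

lemma flagAdj_of_covBy {α : Type*} [PartialOrder α] {F F' : Flag α} {m c c' a : α}
    (hmc : m ⋖ c) (hca : c ⋖ a) (hmc' : m ⋖ c') (hc'a : c' ⋖ a) (hne : c ≠ c')
    (hmF : m ∈ F) (hcF : c ∈ F) (haF : a ∈ F) (hmF' : m ∈ F') (hc'F' : c' ∈ F') (haF' : a ∈ F')
    (h : ∀ x, x ≤ m ∨ a ≤ x → (x ∈ F ↔ x ∈ F')) : flagAdj F F' := by
  have hFF' := F.sdiff_eq_singleton_of_covBy hmc hca hmc' hne hmF hcF haF hc'F' h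
  have hF'F := F'.sdiff_eq_singleton_of_covBy hmc' hc'a hmc hne.symm hmF' hc'F' haF' hcF
    fun x hx => (h x hx).symm
  refine ⟨fun hFF => ?_, by simp [hFF'], by simp [hF'F]⟩
  simp [hFF] at hFF'

lemma covBy_of_le_of_grade_add_one {α : Type*} [PartialOrder α] [GradeOrder ℕ α] {x y : α}
    (hxy : x ≤ y) (h : grade ℕ x + 1 = grade ℕ y) : x ⋖ y :=
  covBy_iff_lt_covBy_grade.2
    ⟨hxy.lt_of_ne (by rintro rfl; omega), Order.covBy_iff_add_one_eq.2 h⟩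

/-- Flag connectivity of the interval `[⊥, a]`, phrased through the flags of the whole order
that pass through `a` and coincide above it. -/
def IsFlagConnectedBelow {α : Type*} [PartialOrder α] (a : α) : Prop :=
  ∀ F F' : Flag α, a ∈ F → a ∈ F' → (∀ x, a ≤ x → (x ∈ F ↔ x ∈ F')) →
    (flagGraph α).Reachable F F'

section CoverGraph

variable {α : Type*} [Lattice α] [GradeOrder ℕ α] {a : α}

lemma exists_reachable_of_coverGraph_adj {c c₁ : {b : α // b ⋖ a}}
    (hadj : (coverGraph a).Adj c c₁) (ih : IsFlagConnectedBelow (c : α)) (F : Flag α)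
    (haF : a ∈ F) (hcF : (c : α) ∈ F) :
    ∃ F₁ : Flag α, a ∈ F₁ ∧ (c₁ : α) ∈ F₁ ∧ (∀ x, a ≤ x → (x ∈ F₁ ↔ x ∈ F)) ∧
      (flagGraph α).Reachable F F₁ := by
  obtain ⟨hne, hgrade⟩ := hadj
  set m : α := (c : α) ⊓ c₁
  have hca := c.2.grade ℕ
  have hc₁a := c₁.2.grade ℕ
  rw [Order.covBy_iff_add_one_eq] at hca hc₁a
  have hmc : m ⋖ c := covBy_of_le_of_grade_add_one inf_le_left (by omega)
  have hmc₁ : m ⋖ c₁ := covBy_of_le_of_grade_add_one inf_le_right (by omega)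
  have hma : m ≤ a := hmc.le.trans c.2.le
  obtain ⟨K, hmK, hcK⟩ := Flag.exists_mem_mem hmc.le
  obtain ⟨K₁, hK₁⟩ := IsChain.exists_subset_flag (c := {m, (c₁ : α), a})
    (((IsChain.singleton).insert fun _ hb _ => .inl (hb ▸ c₁.2.le)).insert
      fun _ hb _ => .inl (by rcases hb with rfl | rfl; exacts [hmc₁.le, hma]))
  -- `H` replaces the part of `F` below `c` by a flag through `m`; `H₁` then swaps `c` for `c₁`.
  let H := F.splice K c hcF hcK
  have hmH : m ∈ H := (Flag.mem_splice_of_le hmc.le).2 hmK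
  let H₁ := (F.splice K₁ a haF (hK₁ (by simp))).splice H m
    ((Flag.mem_splice_of_le hma).2 (hK₁ (by simp))) hmH
  have mem_H_of_ge : ∀ x, a ≤ x → (x ∈ H ↔ x ∈ F) := fun x hx =>
    Flag.mem_splice_of_ge (c.2.le.trans hx)
  have mem_H₁_of_ge : ∀ x, a ≤ x → (x ∈ H₁ ↔ x ∈ F) := fun x hx =>
    (Flag.mem_splice_of_ge (hma.trans hx)).trans (Flag.mem_splice_of_ge hx)
  have hcH : (c : α) ∈ H := (Flag.mem_splice_of_ge le_rfl).2 hcF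
  have hc₁H₁ : (c₁ : α) ∈ H₁ :=
    (Flag.mem_splice_of_ge hmc₁.le).2 ((Flag.mem_splice_of_le c₁.2.le).2 (hK₁ (by simp)))
  refine ⟨H₁, (mem_H₁_of_ge a le_rfl).2 haF, hc₁H₁, mem_H₁_of_ge, ?_⟩
  refine (ih F H hcF hcH fun x hx => (Flag.mem_splice_of_ge hx).symm).trans
    (SimpleGraph.Adj.reachable ?_)
  refine flagAdj_of_covBy hmc c.2 hmc₁ c₁.2 (fun h => hne (Subtype.ext h)) hmH hcH
    ((mem_H_of_ge a le_rfl).2 haF) ((Flag.mem_splice_of_le le_rfl).2 hmH) hc₁H₁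
    ((mem_H₁_of_ge a le_rfl).2 haF) ?_
  rintro x (hxm | hax)
  · exact (Flag.mem_splice_of_le hxm).symm
  · exact (mem_H_of_ge x hax).trans (mem_H₁_of_ge x hax).symm

lemma reachable_of_coverGraph_walk (ih : ∀ c, c ⋖ a → IsFlagConnectedBelow c)
    {c c' : {b : α // b ⋖ a}} (w : (coverGraph a).Walk c c') (F F' : Flag α) (haF : a ∈ F)
    (haF' : a ∈ F') (hcF : (c : α) ∈ F) (hc'F' : (c' : α) ∈ F')
    (h : ∀ x, a ≤ x → (x ∈ F ↔ x ∈ F')) : (flagGraph α).Reachable F F' := by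
  induction w generalizing F with
  | @nil c => exact ih _ c.2 F F' hcF hc'F' (Flag.mem_iff_of_covBy c.2 hcF hc'F' haF haF' h)
  | @cons c c₁ _ hadj _ ihw =>
    obtain ⟨F₁, haF₁, hc₁F₁, hF₁F, hFF₁⟩ :=
      exists_reachable_of_coverGraph_adj hadj (ih c c.2) F haF hcF
    exact hFF₁.trans (ihw F₁ haF₁ hc₁F₁ hc'F' fun x hx => (hF₁F x hx).trans (h x hx))

variable [Finite α]

lemma isFlagConnectedBelow (hconn : ∀ a : α, (coverGraph a).Preconnected) (a : α) :
    IsFlagConnectedBelow a := by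
  induction a using WellFoundedLT.induction with | _ a ih => ?_
  intro F F' haF haF' h
  by_cases hmin : IsMin a
  · have hge : ∀ {G : Flag α} {x}, x ∈ G → a ∈ G → a ≤ x := fun hx ha =>
      (Flag.le_or_le _ ha hx).elim id fun hxa => hmin hxa
    rw [Flag.ext (Set.ext fun x => ⟨fun hx => (h x (hge hx haF)).1 hx,
      fun hx => (h x (hge hx haF')).2 hx⟩)]
  obtain ⟨b, hbF, hba⟩ := F.exists_covBy_mem haF hmin
  obtain ⟨b', hb'F', hb'a⟩ := F'.exists_covBy_mem haF' hmin
  obtain ⟨w⟩ := hconn a ⟨b, hba⟩ ⟨b', hb'a⟩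
  exact reachable_of_coverGraph_walk (fun c hc => ih c hc.lt) w F F' haF haF' hbF hb'F' h

end CoverGraph

theorem stmt14_general {α : Type*} [Fintype α] [Lattice α] [BoundedOrder α] [GradeBoundedOrder ℕ α]
    (hconn : ∀ a : α, (coverGraph a).Preconnected) :
    (flagGraph α).Connected := by
  refine (SimpleGraph.connected_iff _).2 ⟨fun F F' => ?_, inferInstance⟩
  refine isFlagConnectedBelow hconn ⊤ F F' F.top_mem F'.top_mem fun x hx => ?_
  rw [top_le_iff.1 hx]
  exact iff_of_true F.top_mem F'.top_mem

/-- If in a finite graded diamond lattice of rank `d + 1` the graph of elements covered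
by each element `a` (with edges given by meets of rank two below `a`) is connected, then
the lattice is flag connected. -/
theorem stmt14 {α : Type*} [Fintype α] [Lattice α] [BoundedOrder α] [GradeBoundedOrder ℕ α]
    (d : ℕ) (hrank : grade ℕ (⊤ : α) = d + 1) (hdiamond : IsDiamond α)
    (hconn : ∀ a : α, (coverGraph a).Preconnected) :
    (flagGraph α).Connected :=
  stmt14_general hconn
end
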